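/- arXiv:1003.4599 — 5 statements merged into one kernel-verified Lean document; each statement's English description precedes it below -/
import Mathlib

section
/- Under the same hypotheses (uniform n-step entrance probability α > 0 into the finite set S₁), the matrix Q = M₁₂(I − M₂₂)⁻¹M₂₁ + M₁₁ on the finite set S₁ is a stochastic matrix, where M_{ij} are the blocks of M with respect to the partition S = S₁ ∪ S₂. -/
/-!
Pass to the `ℝ≥0∞`-valued kernel `N = ofReal ∘ M`, where all series can be rearranged freely.
From `z ∈ S₂`, the probability of staying in `S₂` for `l` steps is antitone in `l`, and the
entrance hypothesis bounds it by `(1 - α) ^ k` after `k * n` steps, so it tends to `0`. It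
telescopes against the probabilities of entering `S₁` for the first time at step `l + 1`, which
therefore sum to `1`. Summing row `x` of `Q` over `S₁` thus gives
`∑_{y ∈ S₁} M x y + ∑_{z ∈ S₂} M x z = 1`; the row sums being finite, everything transfers back to
the real series.
-/

-- n-step transition probabilities of a kernel on a countable space.
open Classical in
noncomputable def mpow {S : Type*} (M : S → S → ℝ) : ℕ → S → S → ℝ
  | 0 => fun x y => if x = y then 1 else 0
  | (n + 1) => fun x y => ∑' z, mpow M n x z * M z y

open ENNReal Filter Topology Finset

section

variable {S : Type*}

def complBlock {R : Type*} [Zero R] [DecidableEq S] (M : S → S → R) (S₁ : Finset S) :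
    S → S → R :=
  fun a b => if a ∉ S₁ ∧ b ∉ S₁ then M a b else 0

section KernelPower

variable [DecidableEq S]

/-- The `ℝ≥0∞` counterpart of `mpow`: its series need no summability side conditions. -/
noncomputable def epow (N : S → S → ℝ≥0∞) : ℕ → S → S → ℝ≥0∞
  | 0 => fun x y => if x = y then 1 else 0
  | (n + 1) => fun x y => ∑' z, epow N n x z * N z y

theorem epow_add (N : S → S → ℝ≥0∞) (a b : ℕ) (x y : S) :
    epow N (a + b) x y = ∑' z, epow N a x z * epow N b z y := by
  induction b generalizing y with
  | zero => simp [epow]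
  | succ b ih =>
    calc epow N (a + (b + 1)) x y = ∑' w, (∑' z, epow N a x z * epow N b z w) * N w y := by
          simp only [← ih]; rfl
      _ = ∑' z, ∑' w, epow N a x z * (epow N b z w * N w y) := by
          simp only [← ENNReal.tsum_mul_right, mul_assoc]
          exact ENNReal.tsum_comm
      _ = ∑' z, epow N a x z * epow N (b + 1) z y := by
          simp only [ENNReal.tsum_mul_left]; rfl

theorem tsum_epow_le_one {N : S → S → ℝ≥0∞} (hN : ∀ x, ∑' y, N x y ≤ 1) (k : ℕ)
    (x : S) : ∑' y, epow N k x y ≤ 1 := by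
  induction k with
  | zero => simp [epow]
  | succ k ih =>
    calc ∑' y, epow N (k + 1) x y = ∑' z, epow N k x z * ∑' y, N z y := by
          simp only [epow, ← ENNReal.tsum_mul_left]
          exact ENNReal.tsum_comm
      _ ≤ ∑' z, epow N k x z * 1 := by gcongr with z; exact hN z
      _ ≤ 1 := by simpa using ih

theorem epow_mono {N N' : S → S → ℝ≥0∞} (h : ∀ x y, N' x y ≤ N x y) (k : ℕ) (x y : S) :
    epow N' k x y ≤ epow N k x y := by
  induction k generalizing y with
  | zero => rfl
  | succ k ih => exact ENNReal.tsum_le_tsum fun z => mul_le_mul' (ih z) (h z y)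

end KernelPower

theorem tendsto_zero_of_antitone_of_le_pow {u : ℕ → ℝ≥0∞} (hu : Antitone u) {n : ℕ}
    (hn : 0 < n) {c : ℝ≥0∞} (hc : c < 1) (h : ∀ k, u (k * n) ≤ c ^ k) :
    Tendsto u atTop (𝓝 0) := by
  have hdiv : Tendsto (· / n) atTop atTop := (map_div_atTop_eq_nat n hn).le
  refine tendsto_of_tendsto_of_tendsto_of_le_of_le tendsto_const_nhds
    ((ENNReal.tendsto_pow_atTop_nhds_zero_of_lt_one hc).comp hdiv) (fun _ => zero_le)
    fun L => ?_
  exact (hu (Nat.div_mul_le_self L n)).trans (h (L / n))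

section Censoring

variable [DecidableEq S] (N : S → S → ℝ≥0∞) (S₁ : Finset S)

theorem complBlock_le (a b : S) : complBlock N S₁ a b ≤ N a b := by
  unfold complBlock
  split_ifs <;> simp

theorem epow_complBlock_eq_zero {z w : S} (hz : z ∉ S₁) (hw : w ∈ S₁) (l : ℕ) :
    epow (complBlock N S₁) l z w = 0 := by
  cases l with
  | zero => exact if_neg (by rintro rfl; exact hz hw)
  | succ l => simp [epow, complBlock, hw]

theorem sum_add_tsum_ite_notMem (f : S → ℝ≥0∞) :
    ∑ y ∈ S₁, f y + ∑' y, (if y ∉ S₁ then f y else 0) = ∑' y, f y := by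
  rw [← ENNReal.sum_add_tsum_compl S₁ f, _root_.tsum_subtype]
  congr 2 with y
  simp [Set.indicator_apply]

theorem sum_add_tsum_complBlock {N : S → S → ℝ≥0∞} (hN : ∀ x, ∑' y, N x y = 1) (w : S) :
    ∑ y ∈ S₁, (if w ∉ S₁ then N w y else 0) + ∑' y, complBlock N S₁ w y =
      if w ∉ S₁ then 1 else 0 := by
  by_cases hw : w ∈ S₁
  · simp [complBlock, hw]
  · simpa [complBlock, hw] using (sum_add_tsum_ite_notMem S₁ (N w)).trans (hN w)

noncomputable def stayProb (l : ℕ) (z : S) : ℝ≥0∞ :=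
  ∑' w, epow (complBlock N S₁) l z w

/-- The probability, from `z`, of entering `S₁` for the first time at step `l + 1`. -/
noncomputable def exitProb (l : ℕ) (z : S) : ℝ≥0∞ :=
  ∑' w, epow (complBlock N S₁) l z w * ∑ y ∈ S₁, (if w ∉ S₁ then N w y else 0)

/-- The matrix `Q` of the theorem, computed in `ℝ≥0∞`. -/
noncomputable def censoredKernel (x y : S) : ℝ≥0∞ :=
  N x y + ∑' l, ∑' z, ∑' w,
    (if z ∉ S₁ then N x z else 0) * epow (complBlock N S₁) l z w *
      (if w ∉ S₁ then N w y else 0)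

theorem stayProb_add (a b : ℕ) (z : S) :
    stayProb N S₁ (a + b) z = ∑' w, epow (complBlock N S₁) a z w * stayProb N S₁ b w := by
  simp only [stayProb, epow_add, ← ENNReal.tsum_mul_left]
  exact ENNReal.tsum_comm

theorem stayProb_one (w : S) : stayProb N S₁ 1 w = ∑' y, complBlock N S₁ w y := by
  simp [stayProb, epow]

theorem stayProb_mul_le {n : ℕ} {c : ℝ≥0∞} (hc : ∀ w ∉ S₁, stayProb N S₁ n w ≤ c)
    (k : ℕ) : ∀ z ∉ S₁, stayProb N S₁ (k * n) z ≤ c ^ k := by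
  induction k with
  | zero => intro z _; simp [stayProb, epow]
  | succ k ih =>
    intro z hz
    calc stayProb N S₁ ((k + 1) * n) z
        = ∑' w, epow (complBlock N S₁) n z w * stayProb N S₁ (k * n) w := by
          rw [← stayProb_add, add_mul, one_mul, add_comm]
      _ ≤ ∑' w, epow (complBlock N S₁) n z w * c ^ k := by
          refine ENNReal.tsum_le_tsum fun w => ?_
          by_cases hw : w ∈ S₁
          · simp [epow_complBlock_eq_zero N S₁ hz hw]
          · exact mul_le_mul_right (ih w hw) _
      _ = stayProb N S₁ n z * c ^ k := ENNReal.tsum_mul_right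
      _ ≤ c ^ (k + 1) := by rw [pow_succ']; exact mul_le_mul_left (hc z hz) _

variable {N} (hN : ∀ x, ∑' y, N x y = 1)
include hN

theorem exitProb_add_stayProb_succ {z : S} (hz : z ∉ S₁) (l : ℕ) :
    exitProb N S₁ l z + stayProb N S₁ (l + 1) z = stayProb N S₁ l z := by
  rw [stayProb_add, exitProb, ← ENNReal.tsum_add]
  refine tsum_congr fun w => ?_
  rw [stayProb_one, ← mul_add, sum_add_tsum_complBlock S₁ hN]
  by_cases hw : w ∈ S₁
  · simp [epow_complBlock_eq_zero N S₁ hz hw]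
  · simp [hw]

theorem sum_range_exitProb_add_stayProb {z : S} (hz : z ∉ S₁) (L : ℕ) :
    ∑ l ∈ range L, exitProb N S₁ l z + stayProb N S₁ L z = 1 := by
  induction L with
  | zero => simp [stayProb, epow]
  | succ L ih => rw [sum_range_succ, add_assoc, exitProb_add_stayProb_succ S₁ hN hz, ih]

theorem stayProb_le_one (l : ℕ) (z : S) : stayProb N S₁ l z ≤ 1 :=
  tsum_epow_le_one (fun x => (ENNReal.tsum_le_tsum (complBlock_le N S₁ x)).trans (hN x).le) l z

theorem stayProb_antitone (z : S) : Antitone (stayProb N S₁ · z) := by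
  refine antitone_nat_of_succ_le fun l => ?_
  calc stayProb N S₁ (l + 1) z ≤ ∑' w, epow (complBlock N S₁) l z w * 1 := by
        rw [stayProb_add]; gcongr with w; exact stayProb_le_one S₁ hN 1 w
    _ = stayProb N S₁ l z := by simp [stayProb]

theorem stayProb_le_one_sub {z : S} (hz : z ∉ S₁) (n : ℕ) :
    stayProb N S₁ n z ≤ 1 - ∑ y ∈ S₁, epow N n z y := by
  have hle : stayProb N S₁ n z ≤ ∑' w, if w ∉ S₁ then epow N n z w else 0 := by
    refine ENNReal.tsum_le_tsum fun w => ?_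
    by_cases hw : w ∈ S₁
    · simp [epow_complBlock_eq_zero N S₁ hz hw]
    · simpa [hw] using epow_mono (complBlock_le N S₁) n z w
  have hrow := (sum_add_tsum_ite_notMem S₁ (epow N n z)).trans_le
    (tsum_epow_le_one (fun x => (hN x).le) n z)
  exact hle.trans (ENNReal.le_sub_of_add_le_left
    (ne_top_of_le_ne_top one_ne_top (le_self_add.trans hrow)) hrow)

theorem tsum_exitProb {n : ℕ} (hn : 0 < n) {α : ℝ≥0∞} (hα : 0 < α)
    (hent : ∀ z ∉ S₁, α ≤ ∑ y ∈ S₁, epow N n z y) {z : S} (hz : z ∉ S₁) :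
    ∑' l, exitProb N S₁ l z = 1 := by
  have hstay : Tendsto (stayProb N S₁ · z) atTop (𝓝 0) := by
    refine tendsto_zero_of_antitone_of_le_pow (stayProb_antitone S₁ hN z) hn
      (ENNReal.sub_lt_self one_ne_top one_ne_zero hα.ne') fun k => ?_
    refine stayProb_mul_le N S₁ (fun w hw => ?_) k z hz
    exact (stayProb_le_one_sub S₁ hN hw n).trans (tsub_le_tsub_left (hent w hw) 1)
  have hpartial : ∀ L, ∑ l ∈ range L, exitProb N S₁ l z = 1 - stayProb N S₁ L z :=
    fun L => ENNReal.eq_sub_of_add_eq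
      (ne_top_of_le_ne_top one_ne_top (stayProb_le_one S₁ hN L z))
      (sum_range_exitProb_add_stayProb S₁ hN hz L)
  refine tendsto_nhds_unique (ENNReal.tendsto_nat_tsum _) ?_
  simp only [hpartial]
  simpa [Function.comp_def] using
    ((ENNReal.continuous_sub_left one_ne_top).tendsto 0).comp hstay

theorem sum_censoredKernel {n : ℕ} (hn : 0 < n) {α : ℝ≥0∞} (hα : 0 < α)
    (hent : ∀ z ∉ S₁, α ≤ ∑ y ∈ S₁, epow N n z y) (x : S) :
    ∑ y ∈ S₁, censoredKernel N S₁ x y = 1 := by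
  have hexit : ∀ l z, ∑ y ∈ S₁, ∑' w, (if z ∉ S₁ then N x z else 0) *
      epow (complBlock N S₁) l z w * (if w ∉ S₁ then N w y else 0) =
        (if z ∉ S₁ then N x z else 0) * exitProb N S₁ l z := by
    intro l z
    rw [exitProb, ← ENNReal.tsum_mul_left,
      ← Summable.tsum_finsetSum fun _ _ => ENNReal.summable]
    simp only [mul_sum, mul_assoc]
  calc ∑ y ∈ S₁, censoredKernel N S₁ x y
      = ∑ y ∈ S₁, N x y +
          ∑' l, ∑' z, (if z ∉ S₁ then N x z else 0) * exitProb N S₁ l z := by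
        simp only [censoredKernel, sum_add_distrib, ← hexit,
          ← Summable.tsum_finsetSum fun _ _ => ENNReal.summable]
    _ = ∑ y ∈ S₁, N x y + ∑' z, if z ∉ S₁ then N x z else 0 := by
        rw [ENNReal.tsum_comm]
        congr 1
        refine tsum_congr fun z => ?_
        rw [ENNReal.tsum_mul_left]
        split_ifs with hz
        · rw [zero_mul]
        · rw [tsum_exitProb S₁ hN hn hα hent hz, mul_one]
    _ = 1 := (sum_add_tsum_ite_notMem S₁ (N x)).trans (hN x)

end Censoring

theorem tsum_ofReal_eq_one {ι : Type*} {f : ι → ℝ} (hf : ∀ i, 0 ≤ f i)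
    (h : ∑' i, f i = 1) : ∑' i, ENNReal.ofReal (f i) = 1 := by
  have hs : Summable f := by
    by_contra hs
    simp [tsum_eq_zero_of_not_summable hs] at h
  rw [← ENNReal.ofReal_tsum_of_nonneg hf hs, h, ofReal_one]

theorem toReal_tsum_tsum_tsum {α β γ : Type*} {f : α → β → γ → ℝ≥0∞}
    (h : ∑' a, ∑' b, ∑' c, f a b c ≠ ∞) :
    (∑' a, ∑' b, ∑' c, f a b c).toReal = ∑' a, ∑' b, ∑' c, (f a b c).toReal := by
  rw [ENNReal.tsum_toReal_eq (ENNReal.ne_top_of_tsum_ne_top h)]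
  refine tsum_congr fun a => ?_
  have ha := ENNReal.ne_top_of_tsum_ne_top h a
  rw [ENNReal.tsum_toReal_eq (ENNReal.ne_top_of_tsum_ne_top ha)]
  exact tsum_congr fun b => ENNReal.tsum_toReal_eq
    (ENNReal.ne_top_of_tsum_ne_top (ENNReal.ne_top_of_tsum_ne_top ha b))

section RealKernel

variable [DecidableEq S] {M : S → S → ℝ}

theorem mpow_eq_toReal_epow (hM : ∀ x y, 0 ≤ M x y)
    (hrow : ∀ x, ∑' y, ENNReal.ofReal (M x y) ≤ 1) (k : ℕ) (x y : S) :
    mpow M k x y = (epow (fun a b => ENNReal.ofReal (M a b)) k x y).toReal := by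
  induction k generalizing y with
  | zero => by_cases h : x = y <;> simp [mpow, epow, h]
  | succ k ih =>
    have hfin : ∀ z, epow (fun a b => ENNReal.ofReal (M a b)) k x z ≠ ∞ := fun z =>
      ne_top_of_le_ne_top one_ne_top ((ENNReal.le_tsum z).trans (tsum_epow_le_one hrow k x))
    rw [mpow, epow, ENNReal.tsum_toReal_eq fun z => mul_ne_top (hfin z) ofReal_ne_top]
    simp only [ih, toReal_mul, toReal_ofReal (hM _ _)]

theorem ofReal_complBlock (S₁ : Finset S) :
    (fun a b => ENNReal.ofReal (complBlock M S₁ a b)) =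
      complBlock (fun a b => ENNReal.ofReal (M a b)) S₁ := by
  ext a b
  unfold complBlock
  split_ifs <;> simp

theorem complBlock_nonneg (hM : ∀ x y, 0 ≤ M x y) (S₁ : Finset S) (a b : S) :
    0 ≤ complBlock M S₁ a b := by
  unfold complBlock
  split_ifs <;> simp [hM]

theorem toReal_censoredKernel (hM : ∀ x y, 0 ≤ M x y)
    (hrow : ∀ x, ∑' y, ENNReal.ofReal (M x y) ≤ 1) (S₁ : Finset S) {x y : S}
    (hfin : censoredKernel (fun a b => ENNReal.ofReal (M a b)) S₁ x y ≠ ∞) :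
    (censoredKernel (fun a b => ENNReal.ofReal (M a b)) S₁ x y).toReal =
      M x y + ∑' l, ∑' z, ∑' w, (if z ∉ S₁ then M x z else 0) *
        mpow (complBlock M S₁) l z w * (if w ∉ S₁ then M w y else 0) := by
  have hrow₂₂ : ∀ a, ∑' b, ENNReal.ofReal (complBlock M S₁ a b) ≤ 1 := fun a => by
    simp only [congrFun₂ (ofReal_complBlock S₁) a]
    exact (ENNReal.tsum_le_tsum (complBlock_le _ S₁ a)).trans (hrow a)
  rw [censoredKernel, ne_eq, add_eq_top, not_or] at hfin
  rw [censoredKernel, toReal_add ofReal_ne_top hfin.2, toReal_ofReal (hM x y),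
    toReal_tsum_tsum_tsum hfin.2]
  congr 1
  refine tsum_congr fun l => tsum_congr fun z => tsum_congr fun w => ?_
  rw [mpow_eq_toReal_epow (complBlock_nonneg hM S₁) hrow₂₂, ofReal_complBlock]
  simp only [toReal_mul, apply_ite ENNReal.toReal, toReal_ofReal (hM _ _), toReal_zero]

end RealKernel

end

theorem stmt1_general {S : Type*} [DecidableEq S]
    (M : S → S → ℝ) (hMpos : ∀ x y, 0 ≤ M x y) (hMrow : ∀ x, ∑' y, M x y = 1)
    (S₁ : Finset S) (n : ℕ) (hn : 1 ≤ n) (α : ℝ) (hα : 0 < α)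
    (hent : ∀ x : S, α ≤ ∑ y ∈ S₁, mpow M n x y)
    -- the block M₂₂ of M on S₂ = S \ S₁
    (M22 : S → S → ℝ) (hM22 : M22 = fun a b => if a ∉ S₁ ∧ b ∉ S₁ then M a b else 0)
    -- Q = M₁₂ (I - M₂₂)⁻¹ M₂₁ + M₁₁, with (I - M₂₂)⁻¹ = ∑_{l ≥ 0} M₂₂^l
    (Q : S → S → ℝ)
    (hQ : ∀ x y, Q x y = M x y +
      ∑' (l : ℕ), ∑' (z : S), ∑' (w : S),
        (if z ∉ S₁ then M x z else 0) * mpow M22 l z w * (if w ∉ S₁ then M w y else 0)) :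
    ∀ x ∈ S₁, (∀ y ∈ S₁, 0 ≤ Q x y) ∧ ∑ y ∈ S₁, Q x y = 1 := by
  subst hM22
  set N : S → S → ℝ≥0∞ := fun a b => ENNReal.ofReal (M a b)
  have hN : ∀ x, ∑' y, N x y = 1 := fun x => tsum_ofReal_eq_one (hMpos x) (hMrow x)
  have hrow : ∀ x, ∑' y, N x y ≤ 1 := fun x => (hN x).le
  have hentN : ∀ z ∉ S₁, ENNReal.ofReal α ≤ ∑ y ∈ S₁, epow N n z y := fun z _ => by
    refine ofReal_le_of_le_toReal ((hent z).trans_eq ?_)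
    rw [toReal_sum fun y _ => ne_top_of_le_ne_top one_ne_top
      ((ENNReal.le_tsum y).trans (tsum_epow_le_one hrow n z))]
    exact sum_congr rfl fun y _ => mpow_eq_toReal_epow hMpos hrow n z y
  intro x _
  have hsum := sum_censoredKernel S₁ hN hn (ofReal_pos.2 hα) hentN x
  have hfin : ∀ y ∈ S₁, censoredKernel N S₁ x y ≠ ∞ := fun y hy =>
    ne_top_of_le_ne_top one_ne_top (hsum ▸ single_le_sum (fun _ _ => zero_le) hy)
  have hQN : ∀ y ∈ S₁, Q x y = (censoredKernel N S₁ x y).toReal := fun y hy => by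
    rw [hQ, toReal_censoredKernel hMpos hrow S₁ (hfin y hy)]
    rfl
  refine ⟨fun y hy => hQN y hy ▸ toReal_nonneg, ?_⟩
  rw [sum_congr rfl hQN, ← toReal_sum hfin, hsum, toReal_one]

theorem stmt1 {S : Type*} [Countable S] [DecidableEq S]
    (M : S → S → ℝ) (hMpos : ∀ x y, 0 ≤ M x y) (hMrow : ∀ x, ∑' y, M x y = 1)
    (S₁ : Finset S) (n : ℕ) (hn : 1 ≤ n) (α : ℝ) (hα : 0 < α)
    (hent : ∀ x : S, α ≤ ∑ y ∈ S₁, mpow M n x y)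
    -- the block M₂₂ of M on S₂ = S \ S₁
    (M22 : S → S → ℝ) (hM22 : M22 = fun a b => if a ∉ S₁ ∧ b ∉ S₁ then M a b else 0)
    -- Q = M₁₂ (I - M₂₂)⁻¹ M₂₁ + M₁₁, with (I - M₂₂)⁻¹ = ∑_{l ≥ 0} M₂₂^l
    (Q : S → S → ℝ)
    (hQ : ∀ x y, Q x y = M x y +
      ∑' (l : ℕ), ∑' (z : S), ∑' (w : S),
        (if z ∉ S₁ then M x z else 0) * mpow M22 l z w * (if w ∉ S₁ then M w y else 0)) :
    ∀ x ∈ S₁, (∀ y ∈ S₁, 0 ≤ Q x y) ∧ ∑ y ∈ S₁, Q x y = 1 :=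
  stmt1_general M hMpos hMrow S₁ n hn α hα hent M22 hM22 Q hQ
end

section
/- Let M be a stochastic matrix on a countable space S with invariant probability measure π, and suppose there is a finite set S₁ ⊆ S, a time s and α' > 0 with M^s(x,x') ≥ α' for all x ∈ S and x' ∈ S₁, and π(x') ≥ α' for all x' ∈ S₁. Then for every x ∈ S, the total variation distance satisfies ‖M^s(x,·) − π‖_TV ≤ 1 − (α')²·|S₁|. -/
/-!
The measures `M^s(x,·)` and `π` both put mass at least `α'` on every point of `S₁`, so their
overlap `∑ min (M^s(x,y), π y)` is at least `α' |S₁| ≥ α'² |S₁|` (as `α' ≤ π y ≤ 1`). For two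
probability vectors `f, g` and any event `A`, `∑_A (f - g) ≤ ∑_A (f - min f g) ≤ 1 - ∑ min f g`,
and the same bound for `g - f` follows by symmetry.
-/

section

variable {S : Type*}

lemma summable_of_tsum_ne_zero {f : S → ℝ} (h : ∑' y, f y ≠ 0) : Summable f := by
  by_contra hf
  exact h (tsum_eq_zero_of_not_summable hf)

lemma mpow_nonneg {M : S → S → ℝ} (hM : ∀ x y, 0 ≤ M x y) (n : ℕ) (x y : S) :
    0 ≤ mpow M n x y := by
  induction n generalizing y with
  | zero => unfold mpow; split_ifs <;> norm_num
  | succ n ih => exact tsum_nonneg fun z => mul_nonneg (ih z) (hM z y)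

lemma summable_tsum_mul_and_tsum_tsum_mul {M : S → S → ℝ} (hM : ∀ x y, 0 ≤ M x y)
    (hMrow : ∀ x, ∑' y, M x y = 1) {p : S → ℝ} (hp : ∀ z, 0 ≤ p z)
    (hps : Summable p) :
    Summable (fun y => ∑' z, p z * M z y) ∧ ∑' y, ∑' z, p z * M z y = ∑' z, p z := by
  have hrow (z : S) : Summable (fun y => p z * M z y) :=
    (summable_of_tsum_ne_zero (by simp [hMrow z])).mul_left (p z)
  have hrowsum (z : S) : ∑' y, p z * M z y = p z := by rw [tsum_mul_left, hMrow z, mul_one]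
  have hjoint : Summable (Function.uncurry fun z y => p z * M z y) :=
    (summable_prod_of_nonneg fun q => mul_nonneg (hp q.1) (hM q.1 q.2)).2
      ⟨hrow, by simpa only [hrowsum] using hps⟩
  refine ⟨hjoint.prod_symm.prod, ?_⟩
  rw [hjoint.tsum_comm]
  exact tsum_congr hrowsum

lemma mpow_summable_and_tsum_eq_one {M : S → S → ℝ} (hM : ∀ x y, 0 ≤ M x y)
    (hMrow : ∀ x, ∑' y, M x y = 1) (n : ℕ) (x : S) :
    Summable (mpow M n x) ∧ ∑' y, mpow M n x y = 1 := by
  induction n with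
  | zero =>
    have hsupp : ∀ y ∉ ({x} : Finset S), mpow M 0 x y = 0 := fun y hy => by
      simp only [mpow]
      exact if_neg fun h => hy (by simp [h])
    refine ⟨summable_of_ne_finset_zero hsupp, ?_⟩
    rw [tsum_eq_sum hsupp, Finset.sum_singleton]
    simp [mpow]
  | succ n ih =>
    obtain ⟨hs, h1⟩ := ih
    have := summable_tsum_mul_and_tsum_tsum_mul hM hMrow (mpow_nonneg hM n x) hs
    exact ⟨this.1, this.2.trans h1⟩

lemma summable_min {f g : S → ℝ} (hf : ∀ y, 0 ≤ f y) (hg : ∀ y, 0 ≤ g y)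
    (hfs : Summable f) : Summable fun y => min (f y) (g y) :=
  hfs.of_nonneg_of_le (fun y => le_min (hf y) (hg y)) fun _ => min_le_left _ _

lemma tsum_subtype_sub_le {f g : S → ℝ} (hf : ∀ y, 0 ≤ f y) (hg : ∀ y, 0 ≤ g y)
    (hfs : Summable f) (hgs : Summable g) (A : Set S) :
    ∑' y : A, (f y - g y) ≤ ∑' y, f y - ∑' y, min (f y) (g y) := by
  have hms := summable_min hf hg hfs
  calc ∑' y : A, (f y - g y) ≤ ∑' y : A, (f y - min (f y) (g y)) :=
        ((hfs.subtype A).sub (hgs.subtype A)).tsum_le_tsum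
          (fun y => sub_le_sub_left (min_le_right _ _) _) ((hfs.subtype A).sub (hms.subtype A))
    _ ≤ ∑' y, (f y - min (f y) (g y)) :=
        (hfs.sub hms).tsum_subtype_le _ A fun y => sub_nonneg.2 (min_le_left _ _)
    _ = ∑' y, f y - ∑' y, min (f y) (g y) := hfs.tsum_sub hms

lemma abs_tsum_subtype_sub_le {f g : S → ℝ} (hf : ∀ y, 0 ≤ f y) (hg : ∀ y, 0 ≤ g y)
    (hfs : Summable f) (hgs : Summable g) (hfg : ∑' y, f y = ∑' y, g y) (A : Set S) :
    |∑' y : A, (f y - g y)| ≤ ∑' y, f y - ∑' y, min (f y) (g y) := by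
  refine abs_le.2 ⟨?_, tsum_subtype_sub_le hf hg hfs hgs A⟩
  have hgf := tsum_subtype_sub_le hg hf hgs hfs A
  simp only [min_comm (g _), ← hfg, ← neg_sub (f _), tsum_neg] at hgf
  linarith

end

theorem stmt3_general {S : Type*}
    (M : S → S → ℝ) (hMpos : ∀ x y, 0 ≤ M x y) (hMrow : ∀ x, ∑' y, M x y = 1)
    (π : S → ℝ) (hπpos : ∀ x, 0 ≤ π x) (hπ1 : ∑' x, π x = 1)
    (S₁ : Finset S) (s : ℕ) (α' : ℝ) (hα' : 0 < α')
    (hcomm : ∀ x : S, ∀ x' ∈ S₁, α' ≤ mpow M s x x')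
    (hπS₁ : ∀ x' ∈ S₁, α' ≤ π x') :
    ∀ x : S, ∀ A : Set S,
      |∑' y : A, (mpow M s x y - π y)| ≤ 1 - α' ^ 2 * S₁.card := by
  intro x A
  obtain ⟨hfs, hf1⟩ := mpow_summable_and_tsum_eq_one hMpos hMrow s x
  have hπs : Summable π := summable_of_tsum_ne_zero (by simp [hπ1])
  have hfnn := mpow_nonneg hMpos s x
  have hoverlap (y : S) (hy : y ∈ S₁) : α' ^ 2 ≤ min (mpow M s x y) (π y) := by
    have hπy1 : π y ≤ 1 := hπ1 ▸ hπs.le_tsum y fun z _ => hπpos z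
    have : α' ^ 2 ≤ α' := by nlinarith [hπS₁ y hy]
    exact this.trans (le_min (hcomm x y hy) (hπS₁ y hy))
  calc |∑' y : A, (mpow M s x y - π y)|
      ≤ 1 - ∑' y, min (mpow M s x y) (π y) :=
        hf1 ▸ abs_tsum_subtype_sub_le hfnn hπpos hfs hπs (hf1.trans hπ1.symm) A
    _ ≤ 1 - ∑ y ∈ S₁, min (mpow M s x y) (π y) :=
        sub_le_sub_left ((summable_min hfnn hπpos hfs).sum_le_tsum S₁
          fun y _ => le_min (hfnn y) (hπpos y)) 1
    _ ≤ 1 - α' ^ 2 * S₁.card := by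
        have := Finset.card_nsmul_le_sum S₁ _ _ hoverlap
        rw [nsmul_eq_mul] at this
        linarith

/-- If `M^s(x,x') ≥ α'` for all `x` and all `x' ∈ S₁`, and `π(x') ≥ α'` on `S₁`, then
`‖M^s(x,·) − π‖_TV ≤ 1 − (α')² |S₁|`, where the total variation distance is the
supremum over events `A` of the difference of probabilities. -/
theorem stmt3 {S : Type*} [Countable S]
    (M : S → S → ℝ) (hMpos : ∀ x y, 0 ≤ M x y) (hMrow : ∀ x, ∑' y, M x y = 1)
    (π : S → ℝ) (hπpos : ∀ x, 0 ≤ π x) (hπ1 : ∑' x, π x = 1)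
    (hπinv : ∀ y, ∑' x, π x * M x y = π y)
    (S₁ : Finset S) (s : ℕ) (α' : ℝ) (hα' : 0 < α')
    (hcomm : ∀ x : S, ∀ x' ∈ S₁, α' ≤ mpow M s x x')
    (hπS₁ : ∀ x' ∈ S₁, α' ≤ π x') :
    ∀ x : S, ∀ A : Set S,
      |∑' y : A, (mpow M s x y - π y)| ≤ 1 - α' ^ 2 * S₁.card :=
  stmt3_general M hMpos hMrow π hπpos hπ1 S₁ s α' hα' hcomm hπS₁
end

section
/- In the particle deposition model on a finite connected graph G=(V,E) with |V| > 2, for the height-profile-seen-from-maximum process x(u) ∈ (−ℕ₀)^V, one step of the dynamics satisfies: the maximum height is unchanged (max_j h_j(u+1) = max_j h_j(u)) if and only if exactly one coordinate of x changes, i.e. #{j ∈ V : x_j(u) ≠ x_j(u+1)} = 1. -/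
-- Adding a particle at `i` with screening: the new particle lands at one plus the
-- maximal height in the closed neighborhood of `i`.
open Classical in
noncomputable def drop {V : Type*} [Fintype V] (G : SimpleGraph V) (i : V) (h : V → ℕ) :
    V → ℕ :=
  fun j => if j = i then (Finset.univ.filter fun k => k = i ∨ G.Adj i k).sup h + 1 else h j

-- Maximal height of a profile.
def maxH {V : Type*} [Fintype V] (h : V → ℕ) : ℕ := Finset.univ.sup h

-- Height profile seen from the maximum.
def prof {V : Type*} [Fintype V] (h : V → ℕ) : V → ℤ := fun j => (h j : ℤ) - (maxH h : ℤ)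

open Classical in
/-- On a finite connected graph with more than two vertices, one deposition step leaves the
maximal height unchanged iff exactly one coordinate of the profile seen from the maximum
changes. -/
theorem stmt8 {V : Type*} [Fintype V] (G : SimpleGraph V)
    (hconn : G.Connected) (hcard : 2 < Fintype.card V)
    (h : V → ℕ) (i : V) :
    maxH (drop G i h) = maxH h ↔
      (Finset.univ.filter fun j => prof h j ≠ prof (drop G i h) j).card = 1 := by
  classical
  set m := (Finset.univ.filter fun k => k = i ∨ G.Adj i k).sup h with hm
  set M := maxH h with hM
  have hiM : h i ≤ m := Finset.le_sup (by simp)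
  have hmM : m ≤ M := Finset.sup_mono (Finset.subset_univ _)
  have hdrop_i : drop G i h i = m + 1 := by simp [drop, hm]
  have hdrop_ne : ∀ j, j ≠ i → drop G i h j = h j := by
    intro j hj; simp [drop, hj]
  have hmax : maxH (drop G i h) = max (m + 1) M := by
    apply le_antisymm
    · apply Finset.sup_le
      intro j _
      by_cases hj : j = i
      · subst hj; rw [hdrop_i]; exact le_max_left _ _
      · rw [hdrop_ne j hj]
        exact le_trans (Finset.le_sup (Finset.mem_univ j)) (le_max_right _ _)
    · apply max_le
      · rw [← hdrop_i]; exact Finset.le_sup (Finset.mem_univ i)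
      · apply Finset.sup_le
        intro j _
        by_cases hj : j = i
        · rw [hj]
          calc h i ≤ m := hiM
            _ ≤ drop G i h i := by rw [hdrop_i]; omega
            _ ≤ maxH (drop G i h) := Finset.le_sup (Finset.mem_univ i)
        · rw [← hdrop_ne j hj]; exact Finset.le_sup (Finset.mem_univ j)
  rcases lt_or_eq_of_le hmM with hlt | heq
  · have hmax' : maxH (drop G i h) = M := by rw [hmax]; omega
    have hfil : (Finset.univ.filter fun j => prof h j ≠ prof (drop G i h) j) = {i} := by
      ext j
      simp only [Finset.mem_filter, Finset.mem_univ, true_and, Finset.mem_singleton]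
      constructor
      · intro hne
        by_contra hj
        exact hne (by simp [prof, hdrop_ne j hj, hmax', hM])
      · intro hj
        subst hj
        simp only [prof, hdrop_i, hmax', ← hM]
        have : h j < m + 1 := by omega
        intro hcon
        push_cast at hcon
        omega
    rw [hfil]
    simp [hmax']
  · have hmax' : maxH (drop G i h) = M + 1 := by rw [hmax]; omega
    constructor
    · intro hcon; omega
    · intro hcard1
      exfalso
      have hsub : Finset.univ.erase i ⊆
          (Finset.univ.filter fun j => prof h j ≠ prof (drop G i h) j) := by
        intro j hj
        have hji : j ≠ i := (Finset.mem_erase.mp hj).1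
        simp only [Finset.mem_filter, Finset.mem_univ, true_and]
        simp only [prof, hdrop_ne j hji, hmax', ← hM]
        intro hcon
        push_cast at hcon
        omega
      have := Finset.card_le_card hsub
      rw [hcard1, Finset.card_erase_of_mem (Finset.mem_univ i), Finset.card_univ] at this
      omega
end

section
/- Let G=(V,E) be a finite connected graph, i ∈ V, and (a₁,…,a_{|V|−1}) an i-ordering of V∖{i}. Then for any two height configurations h, h' ∈ ℕ₀^V both attaining their maximum at i with the same maximal value, the configurations T_{a_{|V|−1}} ⋯ T_{a_1} h and T_{a_{|V|−1}} ⋯ T_{a_1} h' agree after subtracting their maxima; equivalently, the resulting profile seen from the maximum x^{(i)} depends only on i and the chosen ordering, not on the initial profile. Moreover min_j x^{(i)}_j ≥ −(|V|−1). -/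
section

variable {V : Type*}

section Drop

variable [Fintype V] (G : SimpleGraph V)

open Classical in
lemma drop_apply_self (v : V) (h : V → ℕ) :
    drop G v h v = (Finset.univ.filter fun k => k = v ∨ G.Adj v k).sup h + 1 := by
  simp [drop]

lemma drop_apply_of_ne {v j : V} (h : V → ℕ) (hj : j ≠ v) : drop G v h j = h j := by
  simp [drop, hj]

lemma maxH_drop_le (v : V) (h : V → ℕ) : maxH (drop G v h) ≤ maxH h + 1 := by
  refine Finset.sup_le fun j _ => ?_
  by_cases hj : j = v
  · subst hj
    rw [drop_apply_self]
    exact Nat.succ_le_succ (Finset.sup_mono (Finset.subset_univ _))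
  · rw [drop_apply_of_ne G h hj]
    exact (Finset.le_sup (Finset.mem_univ j)).trans (Nat.le_succ _)

lemma maxH_foldl_drop_le (L : List V) (h : V → ℕ) :
    maxH (L.foldl (fun c v => drop G v c) h) ≤ maxH h + L.length := by
  induction L generalizing h with
  | nil => simp
  | cons v L ih =>
    calc maxH (L.foldl (fun c v => drop G v c) (drop G v h))
        ≤ maxH (drop G v h) + L.length := ih _
      _ ≤ maxH h + (v :: L).length := by
        simp only [List.length_cons]; linarith [maxH_drop_le G v h]

end Drop

/-- An `i`-ordering of `V ∖ {i}` is an ordering from `{i}`. -/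
def SimpleGraph.IsOrderingFrom (G : SimpleGraph V) : Set V → List V → Prop
  | _, [] => True
  | S, v :: L => (∃ s ∈ S, G.Adj v s) ∧ G.IsOrderingFrom (insert v S) L

lemma SimpleGraph.isOrderingFrom_ofFn (G : SimpleGraph V) {n : ℕ} {S : Set V} {a : Fin n → V}
    (hord : ∀ k, ∃ j, (j ∈ S ∨ ∃ l, l < k ∧ a l = j) ∧ G.Adj (a k) j) :
    G.IsOrderingFrom S (List.ofFn a) := by
  induction n generalizing S with
  | zero => simp [SimpleGraph.IsOrderingFrom]
  | succ n ih =>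
    rw [List.ofFn_succ]
    refine ⟨?_, ih fun k => ?_⟩
    · obtain ⟨j, hj | ⟨l, hl, -⟩, hadj⟩ := hord 0
      · exact ⟨j, hj, hadj⟩
      · exact absurd hl (Fin.not_lt_zero l)
    · obtain ⟨j, hj, hadj⟩ := hord k.succ
      refine ⟨j, ?_, hadj⟩
      rcases hj with hj | ⟨l, hl, rfl⟩
      · exact Or.inl (Set.mem_insert_of_mem _ hj)
      · induction l using Fin.cases with
        | zero => exact Or.inl (Set.mem_insert _ _)
        | succ l => exact Or.inr ⟨l, Fin.succ_lt_succ_iff.mp hl, rfl⟩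

def AgreeAbove (S : Set V) (M : ℕ) (f f' : V → ℕ) : Prop :=
  (∀ s ∈ S, f s = f' s ∧ M ≤ f s) ∧ ∀ x ∉ S, f x ≤ M ∧ f' x ≤ M

namespace AgreeAbove

variable {S : Set V} {M : ℕ} {f f' : V → ℕ}

lemma symm (hA : AgreeAbove S M f f') : AgreeAbove S M f' f :=
  ⟨fun s hs => ⟨(hA.1 s hs).1.symm, (hA.1 s hs).1 ▸ (hA.1 s hs).2⟩,
    fun x hx => (hA.2 x hx).symm⟩

lemma sup_le_sup [Fintype V] (hA : AgreeAbove S M f f') {N : Finset V} {s₀ : V}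
    (hs₀N : s₀ ∈ N) (hs₀S : s₀ ∈ S) : N.sup f ≤ N.sup f' := by
  refine Finset.sup_le fun x hx => ?_
  by_cases hxS : x ∈ S
  · exact (hA.1 x hxS).1 ▸ Finset.le_sup hx
  · calc f x ≤ M := (hA.2 x hxS).1
      _ ≤ f s₀ := (hA.1 s₀ hs₀S).2
      _ = f' s₀ := (hA.1 s₀ hs₀S).1
      _ ≤ N.sup f' := Finset.le_sup hs₀N

lemma drop_of_adj [Fintype V] {G : SimpleGraph V} (hA : AgreeAbove S M f f') {v s₀ : V}
    (hs₀ : s₀ ∈ S) (hadj : G.Adj v s₀) :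
    AgreeAbove (insert v S) M (drop G v f) (drop G v f') := by
  classical
  set N := Finset.univ.filter fun k => k = v ∨ G.Adj v k
  have hs₀N : s₀ ∈ N := by simp [N, hadj]
  have hsup : N.sup f = N.sup f' :=
    (hA.sup_le_sup hs₀N hs₀).antisymm (hA.symm.sup_le_sup hs₀N hs₀)
  refine ⟨fun s hs => ?_, fun x hx => ?_⟩
  · by_cases hsv : s = v
    · subst hsv
      rw [drop_apply_self, drop_apply_self]
      exact ⟨by rw [hsup], (hA.1 s₀ hs₀).2.trans ((Finset.le_sup hs₀N).trans (Nat.le_succ _))⟩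
    · rw [drop_apply_of_ne G f hsv, drop_apply_of_ne G f' hsv]
      exact hA.1 s ((Set.mem_insert_iff.mp hs).resolve_left hsv)
  · obtain ⟨hxv, hxS⟩ := not_or.mp hx
    rw [drop_apply_of_ne G f hxv, drop_apply_of_ne G f' hxv]
    exact hA.2 x hxS

lemma foldl_drop [Fintype V] {G : SimpleGraph V} (hA : AgreeAbove S M f f') {L : List V}
    (hL : G.IsOrderingFrom S L) :
    AgreeAbove (S ∪ {x | x ∈ L}) M (L.foldl (fun c v => drop G v c) f)
      (L.foldl (fun c v => drop G v c) f') := by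
  induction L generalizing S f f' with
  | nil => simpa using hA
  | cons v L ih =>
    obtain ⟨⟨s₀, hs₀, hadj⟩, hL⟩ := hL
    rw [List.foldl_cons, List.foldl_cons]
    convert ih (hA.drop_of_adj hs₀ hadj) hL using 1
    ext x
    simp only [Set.mem_union, Set.mem_ofPred_eq, List.mem_cons, Set.mem_insert_iff]
    tauto

end AgreeAbove

end

theorem stmt12_general {V : Type*} [Fintype V] (G : SimpleGraph V)
    (i : V)
    (a : Fin (Fintype.card V - 1) → V)
    (hrange : Set.range a = {i}ᶜ)
    (hord : ∀ k, ∃ j, (j = i ∨ ∃ l, l < k ∧ a l = j) ∧ G.Adj (a k) j)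
    (h h' : V → ℕ)
    (hmax : ∀ j, h j ≤ h i) (hmax' : ∀ j, h' j ≤ h' i) (heq : h i = h' i) :
    (∀ j, prof ((List.ofFn a).foldl (fun c v => drop G v c) h) j =
      prof ((List.ofFn a).foldl (fun c v => drop G v c) h') j)
    ∧ (∀ j, -((Fintype.card V : ℤ) - 1) ≤
        prof ((List.ofFn a).foldl (fun c v => drop G v c) h) j) := by
  have hinit : AgreeAbove {i} (h i) h h' :=
    ⟨fun s hs => by subst hs; exact ⟨heq, le_rfl⟩, fun x _ => ⟨hmax x, heq ▸ hmax' x⟩⟩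
  have hcover : {i} ∪ {x | x ∈ List.ofFn a} = Set.univ := by
    refine Set.eq_univ_of_forall fun x => ?_
    by_cases hx : x = i
    · exact Or.inl hx
    · exact Or.inr (List.mem_ofFn.mpr (hrange ▸ hx : x ∈ Set.range a))
  obtain ⟨hfinal, -⟩ := hinit.foldl_drop (G.isOrderingFrom_ofFn (S := {i}) hord)
  rw [hcover] at hfinal
  refine ⟨fun j => by simp only [prof, funext fun x => (hfinal x trivial).1], fun j => ?_⟩
  have hlow := (hfinal j trivial).2
  have hup := maxH_foldl_drop_le G (List.ofFn a) h
  rw [List.length_ofFn] at hup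
  have hmaxH : maxH h ≤ h i := Finset.sup_le fun x _ => hmax x
  have hcard : 0 < Fintype.card V := Fintype.card_pos_iff.mpr ⟨i⟩
  simp only [prof]
  omega

/-- Dropping particles along an `i`-ordering erases the memory of the initial profile:
if `h, h'` both attain their maximum at `i` with the same maximal value, then after
applying `T_{a_{|V|−1}} ⋯ T_{a_1}` the two configurations have the same profile seen
from the maximum, and this profile `x⁽ⁱ⁾` has depth at most `|V| − 1`. -/
theorem stmt12 {V : Type*} [Fintype V] [DecidableEq V] (G : SimpleGraph V)
    (hconn : G.Connected) (i : V)
    (a : Fin (Fintype.card V - 1) → V)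
    (hinj : Function.Injective a) (hrange : Set.range a = {i}ᶜ)
    (hord : ∀ k, ∃ j, (j = i ∨ ∃ l, l < k ∧ a l = j) ∧ G.Adj (a k) j)
    (h h' : V → ℕ)
    (hmax : ∀ j, h j ≤ h i) (hmax' : ∀ j, h' j ≤ h' i) (heq : h i = h' i) :
    (∀ j, prof ((List.ofFn a).foldl (fun c v => drop G v c) h) j =
      prof ((List.ofFn a).foldl (fun c v => drop G v c) h') j)
    ∧ (∀ j, -((Fintype.card V : ℤ) - 1) ≤
        prof ((List.ofFn a).foldl (fun c v => drop G v c) h) j) :=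
  stmt12_general G i a hrange hord h h' hmax hmax' heq
end

section
/- For any profile x^{(i)} ∈ S₁ (obtained from an i-ordering) on a finite connected graph and any vertex j, applying |V|−1 consecutive particle drops at j yields a profile whose maximum is at j: (T_j)^{|V|−1} x^{(i)} ∈ S^{(j)}. -/
-- Adding a particle at `i` with screening, acting on (ℤ-valued) height profiles.
open Classical in
noncomputable def dropZ {V : Type*} [Fintype V] (G : SimpleGraph V) (i : V) (x : V → ℤ) :
    V → ℤ :=
  fun j => if j = i then
    (Finset.univ.filter fun k => k = i ∨ G.Adj i k).sup'
      ⟨i, by simp⟩ x + 1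
  else x j

-- Profile seen from the maximum: subtract the maximal height.
noncomputable def normP {V : Type*} [Fintype V] [Nonempty V] (x : V → ℤ) : V → ℤ :=
  fun j => x j - Finset.univ.sup' Finset.univ_nonempty x

-- Transition matrix of the profile chain for independent droppings with law `p`.
open Classical in
noncomputable def Mchain {V : Type*} [Fintype V] [Nonempty V] (G : SimpleGraph V)
    (p : V → ℝ) (x y : V → ℤ) : ℝ :=
  ∑ i : V, if y = normP (dropZ G i x) then p i else 0

-- The profile `x⁽ⁱ⁾` obtained by dropping particles along the `i`-ordering `ord i`
-- starting from a profile with maximum at `i`.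
noncomputable def xprof {V : Type*} [Fintype V] [Nonempty V] (G : SimpleGraph V)
    (ord : V → Fin (Fintype.card V - 1) → V) (i : V) : V → ℤ :=
  normP ((List.ofFn (ord i)).foldl (fun x v => dropZ G v x) (fun _ => 0))

/-- Dropping `|V| − 1` particles at a vertex `j` on a profile of depth at most `|V| − 1`
with maximum `0` shifts the maximum to `j`: `(T_j)^{|V|−1} x⁽ⁱ⁾ ∈ S^{(j)}`. -/
theorem stmt15 {V : Type*} [Fintype V] [Nonempty V] (G : SimpleGraph V)
    (hconn : G.Connected)
    (x : V → ℤ)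
    (hmin : ∀ k, -((Fintype.card V : ℤ) - 1) ≤ x k)
    (hmax : ∀ k, x k ≤ 0) (hzero : ∃ k, x k = 0)
    (j : V) :
    ∀ k, (dropZ G j)^[Fintype.card V - 1] x k ≤ (dropZ G j)^[Fintype.card V - 1] x j := by
  classical
  have hfix : ∀ m k, k ≠ j → (dropZ G j)^[m] x k = x k := by
    intro m
    induction m with
    | zero => intro k _; simp
    | succ m ih =>
      intro k hk
      rw [Function.iterate_succ_apply']
      simp only [dropZ, if_neg hk]
      exact ih k hk
  have hgrow : ∀ m : ℕ, x j + m ≤ (dropZ G j)^[m] x j := by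
    intro m
    induction m with
    | zero => simp
    | succ m ih =>
      rw [Function.iterate_succ_apply']
      have hle : (dropZ G j)^[m] x j ≤
          (Finset.univ.filter fun k => k = j ∨ G.Adj j k).sup'
            ⟨j, by simp⟩ ((dropZ G j)^[m] x) := by
        apply Finset.le_sup'
        simp
      simp only [dropZ, if_pos rfl]
      push_cast
      linarith
  intro k
  by_cases hk : k = j
  · subst hk; exact le_refl _
  · rw [hfix _ k hk]
    have h1 := hgrow (Fintype.card V - 1)
    have hc : 1 ≤ Fintype.card V := Fintype.card_pos
    have hcast : ((Fintype.card V - 1 : ℕ) : ℤ) = (Fintype.card V : ℤ) - 1 := by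
      omega
    rw [hcast] at h1
    have h2 := hmax k
    have h3 := hmin j
    linarith
end
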